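/- For all integers n ≥ 3 and 1 ≤ m ≤ ⌊(n−1)/2⌋, the generalised Petersen graph P(n,m) admits a super vertex-antimagic total labeling, i.e. a bijection f : V ∪ E → {1,...,5n} with f(V)={1,...,2n} such that all vertex-weights f(v)+Σ_{u∈N(v)} f(uv) are pairwise distinct. -/

import Mathlib

open Sum

/-- The weight of an edge `e` under a total labeling `f` of the graph `G`:
the label of `e` plus the labels of its two endpoints. -/
noncomputable def edgeWt {V : Type*} (G : SimpleGraph V) (f : V ⊕ G.edgeSet → ℕ)
    (e : G.edgeSet) : ℕ :=
  f (inr e) + ∑ᶠ (v : V) (_ : v ∈ (e : Sym2 V)), f (inl v)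

/-- The weight of a vertex `v` under a total labeling `f` of the graph `G`:
the label of `v` plus the labels of all edges incident with `v`. -/
noncomputable def vertexWt {V : Type*} (G : SimpleGraph V) (f : V ⊕ G.edgeSet → ℕ)
    (v : V) : ℕ :=
  f (inl v) + ∑ᶠ (e : G.edgeSet) (_ : v ∈ (e : Sym2 V)), f (inr e)

/-- The generalised Petersen graph `P(n,m)`, with outer vertices `u_i = inl i` and
inner vertices `v_i = inr i` (`i` running over `Fin n`), outer cycle edges `u_i u_{i+1}`,
spokes `u_i v_i`, and inner edges `v_i v_{i+m}` (indices mod `n`). -/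
def petersen (n m : ℕ) : SimpleGraph (Fin n ⊕ Fin n) :=
  SimpleGraph.fromRel (fun a b =>
    (∃ p q : Fin n, ((p : ℕ) + 1) % n = (q : ℕ) ∧ a = inl p ∧ b = inl q) ∨
    (∃ p q : Fin n, ((p : ℕ) + m) % n = (q : ℕ) ∧ a = inr p ∧ b = inr q) ∨
    (∃ p : Fin n, a = inl p ∧ b = inr p))

/-!
Any finite graph has a super vertex-antimagic total labeling: label the edges arbitrarily with
the large labels, then give the vertices the labels `1, …, |V|` in increasing order of the sum
of the labels on their incident edges. A vertex weight is its label plus that sum, so weights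
increase strictly with the vertex label. For `P(n,m)` it only remains to count its edges: the
`3n` outer, spoke and inner edges are pairwise distinct since `1 ≤ m` and `2m < n`.
-/

theorem exists_equiv_fin_injective_add {α : Type*} [Finite α] (S : α → ℕ) :
    ∃ e : α ≃ Fin (Nat.card α), Function.Injective fun a => (e a : ℕ) + S a := by
  let e₀ := Finite.equivFin α
  let e := e₀.trans (Tuple.sort (S ∘ e₀.symm)).symm
  have hmono : Monotone (S ∘ e.symm) := Tuple.monotone_sort (S ∘ e₀.symm)
  have hstrict : StrictMono fun i : Fin (Nat.card α) => (i : ℕ) + (S ∘ e.symm) i :=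
    Fin.val_strictMono.add_monotone hmono
  refine ⟨e, fun a b hab => e.injective (hstrict.injective ?_)⟩
  simpa using hab

theorem bijOn_equiv_fin_val_add_one {α : Type*} {k : ℕ} (e : α ≃ Fin k) :
    Set.BijOn (fun a => (e a : ℕ) + 1) Set.univ (Set.Icc 1 k) := by
  refine ⟨fun a _ => ?_, fun a _ b _ hab => ?_, fun j hj => ?_⟩
  · have := (e a).isLt
    simp only [Set.mem_Icc]
    omega
  · exact e.injective (Fin.ext (by simpa using hab))
  · obtain ⟨hj1, hjk⟩ := hj
    exact ⟨e.symm ⟨j - 1, by omega⟩, Set.mem_univ _, by simp; omega⟩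

theorem SimpleGraph.exists_super_vertexAntimagic {V : Type*} [Finite V] (G : SimpleGraph V) :
    ∃ f : V ⊕ G.edgeSet → ℕ,
      Set.BijOn f Set.univ (Set.Icc 1 (Nat.card V + Nat.card G.edgeSet)) ∧
      Set.BijOn (fun v => f (inl v)) Set.univ (Set.Icc 1 (Nat.card V)) ∧
      Function.Injective (vertexWt G f) := by
  let eE := Finite.equivFin G.edgeSet
  obtain ⟨eV, hinj⟩ := exists_equiv_fin_injective_add fun v =>
    ∑ᶠ (ε : G.edgeSet) (_ : v ∈ (ε : Sym2 V)), (Nat.card V + eE ε + 1)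
  let e := (eV.sumCongr eE).trans finSumFinEquiv
  refine ⟨fun x => (e x : ℕ) + 1, bijOn_equiv_fin_val_add_one e,
    bijOn_equiv_fin_val_add_one eV, fun v w hvw => hinj ?_⟩
  have he_inl : ∀ v, (e (inl v) : ℕ) = eV v := fun v => rfl
  have he_inr : ∀ ε, (e (inr ε) : ℕ) = Nat.card V + eE ε := fun ε => rfl
  simpa only [vertexWt, he_inl, he_inr, add_right_comm _ 1, add_left_inj] using hvw

namespace Fin

variable {n k : ℕ}

/-- Written as `(i + k) % n`, as in `petersen`, rather than with the ring structure of `Fin n`. -/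
def addMod (k : ℕ) (i : Fin n) : Fin n := ⟨(i + k) % n, Nat.mod_lt _ i.pos⟩

theorem val_addMod_of_lt (hk : k < n) (i : Fin n) :
    (i.addMod k : ℕ) = if i + k < n then i + k else i + k - n := by
  have := i.isLt
  split_ifs with h
  · exact Nat.mod_eq_of_lt h
  · show (i + k) % n = i + k - n
    rw [Nat.mod_eq_sub_mod (by omega), Nat.mod_eq_of_lt (by omega)]

theorem addMod_ne_self (hk0 : 0 < k) (hk : k < n) (i : Fin n) : i.addMod k ≠ i := by
  intro h
  have := congrArg Fin.val h
  rw [val_addMod_of_lt hk] at this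
  split_ifs at this <;> omega

theorem addMod_addMod_ne_self (hk0 : 0 < k) (hk : 2 * k < n) (i : Fin n) :
    (i.addMod k).addMod k ≠ i := by
  intro h
  have h₁ := val_addMod_of_lt (k := k) (by omega) i
  have h₂ := val_addMod_of_lt (k := k) (by omega) (i.addMod k)
  rw [h] at h₂
  split_ifs at h₁ h₂ <;> omega

end Fin

def petersenEdge (n m : ℕ) : Fin n ⊕ Fin n ⊕ Fin n → Sym2 (Fin n ⊕ Fin n)
  | inl i => s(inl i, inl (i.addMod 1))
  | inr (inl i) => s(inl i, inr i)
  | inr (inr i) => s(inr i, inr (i.addMod m))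

section Petersen

variable {n m : ℕ}

theorem petersenEdge_injective (hm : 0 < m) (hmn : 2 * m < n) :
    Function.Injective (petersenEdge n m) := by
  rintro (i | i | i) (j | j | j) h <;>
    simp only [petersenEdge, Sym2.eq_iff, inl.injEq, inr.injEq, reduceCtorEq, and_false,
      false_and, or_false] at h
  · rcases h with ⟨rfl, -⟩ | ⟨rfl, hj⟩
    · rfl
    · exact absurd hj (Fin.addMod_addMod_ne_self one_pos (by omega) j)
  · rw [h.1]
  · rcases h with ⟨rfl, -⟩ | ⟨rfl, hj⟩
    · rfl
    · exact absurd hj (Fin.addMod_addMod_ne_self hm hmn j)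

theorem range_petersenEdge (hm : 0 < m) (hmn : 2 * m < n) :
    Set.range (petersenEdge n m) = (petersen n m).edgeSet := by
  refine Set.Subset.antisymm ?_ fun e he => ?_
  · rintro _ ⟨i | i | i, rfl⟩ <;>
      rw [petersenEdge, SimpleGraph.mem_edgeSet, petersen, SimpleGraph.fromRel_adj]
    · exact ⟨by simpa using (Fin.addMod_ne_self one_pos (by omega) i).symm,
        Or.inl (Or.inl ⟨i, _, rfl, rfl, rfl⟩)⟩
    · exact ⟨by simp, Or.inl (Or.inr (Or.inr ⟨i, rfl, rfl⟩))⟩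
    · exact ⟨by simpa using (Fin.addMod_ne_self hm (by omega) i).symm,
        Or.inl (Or.inr (Or.inl ⟨i, _, rfl, rfl, rfl⟩))⟩
  induction e using Sym2.ind with | _ a b => ?_
  rw [SimpleGraph.mem_edgeSet, petersen, SimpleGraph.fromRel_adj] at he
  have mem_range : ∀ c d : Fin n ⊕ Fin n,
      ((∃ p q : Fin n, ((p : ℕ) + 1) % n = (q : ℕ) ∧ c = inl p ∧ d = inl q) ∨
        (∃ p q : Fin n, ((p : ℕ) + m) % n = (q : ℕ) ∧ c = inr p ∧ d = inr q) ∨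
        (∃ p : Fin n, c = inl p ∧ d = inr p)) → s(c, d) ∈ Set.range (petersenEdge n m) := by
    rintro c d (⟨p, q, hpq, rfl, rfl⟩ | ⟨p, q, hpq, rfl, rfl⟩ | ⟨p, rfl, rfl⟩)
    · exact ⟨inl p, by rw [petersenEdge, show p.addMod 1 = q from Fin.ext hpq]⟩
    · exact ⟨inr (inr p), by rw [petersenEdge, show p.addMod m = q from Fin.ext hpq]⟩
    · exact ⟨inr (inl p), rfl⟩
  obtain ⟨-, hab | hba⟩ := he
  · exact mem_range a b hab
  · exact Sym2.eq_swap ▸ mem_range b a hba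

theorem card_edgeSet_petersen (hm : 0 < m) (hmn : 2 * m < n) :
    Nat.card (petersen n m).edgeSet = 3 * n := by
  rw [← range_petersenEdge hm hmn, Nat.card_range_of_injective (petersenEdge_injective hm hmn)]
  simp only [Nat.card_sum, Nat.card_fin]
  ring

end Petersen

theorem petersen_super_VAT (n m : ℕ) (hm1 : 1 ≤ m) (hm2 : m ≤ (n - 1) / 2) :
    ∃ f : (Fin n ⊕ Fin n) ⊕ (petersen n m).edgeSet → ℕ,
      Set.BijOn f Set.univ (Set.Icc 1 (5 * n)) ∧
      Set.BijOn (fun v => f (inl v)) Set.univ (Set.Icc 1 (2 * n)) ∧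
      Function.Injective (vertexWt (petersen n m) f) := by
  have hV : Nat.card (Fin n ⊕ Fin n) = 2 * n := by simp [two_mul]
  have hE := card_edgeSet_petersen hm1 (show 2 * m < n by omega)
  obtain ⟨f, hf, hfV, hwt⟩ := (petersen n m).exists_super_vertexAntimagic
  rw [hV, hE, ← add_mul] at hf
  exact ⟨f, hf, hV ▸ hfV, hwt⟩
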